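/- If (X, τ) is a locally connected topological space, then X equipped with the topology *O(X) of *-open sets is locally connected. -/

import Mathlib

open Set TopologicalSpace

def RegOpen (X : Type*) [TopologicalSpace X] (U : Set X) : Prop :=
  interior (closure U) = U

def starInt (X : Type*) [TopologicalSpace X] (A : Set X) : Set X :=
  {x | x ∈ A ∧ ∃ W, RegOpen X W ∧ x ∈ W ∧ W ⊆ A}

def starCl (X : Type*) [TopologicalSpace X] (A : Set X) : Set X :=
  {x | ∀ W, RegOpen X W → x ∈ W → (W ∩ A).Nonempty}

def StarOpen (X : Type*) [TopologicalSpace X] (A : Set X) : Prop :=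
  ∀ x ∈ A, ∃ W, RegOpen X W ∧ x ∈ W ∧ W ⊆ A

def starTop (X : Type*) [TopologicalSpace X] : TopologicalSpace X :=
  TopologicalSpace.generateFrom {A | StarOpen X A}

def StarContinuous {X Y : Type*} [TopologicalSpace X] [TopologicalSpace Y] (f : X → Y) : Prop :=
  ∀ A : Set Y, StarOpen Y A → StarOpen X (f ⁻¹' A)

/-! The regular open sets form a basis of `*O(X)`, and in a locally connected space the
component `D` of a point in a regular open set `W` is again regular open: `int (cl D)` is
preconnected (it lies between `D` and `cl D`) and contained in `W`, hence contained in `D`. So the connected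
regular open sets form a basis of `*O(X)`, and they stay connected because `*O(X)` is
coarser than the original topology. -/

open Topology

theorem IsPreconnected.of_le {X : Type*} {t₁ t₂ : TopologicalSpace X} (h : t₁ ≤ t₂)
    {s : Set X} (hs : @IsPreconnected X t₁ s) : @IsPreconnected X t₂ s := by
  have := @IsPreconnected.image X X t₁ t₂ s hs id
    (@Continuous.continuousOn X X t₁ t₂ id s (@continuous_id_of_le X t₁ t₂ h))
  rwa [image_id] at this

section StarTopology

variable {X : Type*} [TopologicalSpace X]

theorem RegOpen.isOpen {U : Set X} (hU : RegOpen X U) : IsOpen U :=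
  hU ▸ isOpen_interior

theorem RegOpen.starOpen {U : Set X} (hU : RegOpen X U) : StarOpen X U :=
  fun _ hx => ⟨U, hU, hx, subset_rfl⟩

theorem regOpen_univ : RegOpen X univ := by
  simp [RegOpen]

theorem RegOpen.inter {U V : Set X} (hU : RegOpen X U) (hV : RegOpen X V) :
    RegOpen X (U ∩ V) := by
  refine subset_antisymm (fun x hx => ⟨?_, ?_⟩)
    (interior_maximal subset_closure (hU.isOpen.inter hV.isOpen))
  · exact hU ▸ interior_mono (closure_mono inter_subset_left) hx
  · exact hV ▸ interior_mono (closure_mono inter_subset_right) hx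

theorem StarOpen.isOpen {A : Set X} (hA : StarOpen X A) : IsOpen A :=
  isOpen_iff_forall_mem_open.2 fun x hx =>
    let ⟨W, hW, hxW, hWA⟩ := hA x hx
    ⟨W, hWA, hW.isOpen, hxW⟩

theorem isOpen_starTop_iff {A : Set X} : IsOpen[starTop X] A ↔ StarOpen X A := by
  refine ⟨fun hA => ?_, fun hA => GenerateOpen.basic A hA⟩
  induction hA with
  | basic s hs => exact hs
  | univ => exact regOpen_univ.starOpen
  | inter s t _ _ hs ht =>
    intro x hx
    obtain ⟨W₁, hW₁, hx₁, hW₁s⟩ := hs x hx.1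
    obtain ⟨W₂, hW₂, hx₂, hW₂t⟩ := ht x hx.2
    exact ⟨W₁ ∩ W₂, hW₁.inter hW₂, ⟨hx₁, hx₂⟩, inter_subset_inter hW₁s hW₂t⟩
  | sUnion S _ hS =>
    rintro x ⟨s, hsS, hxs⟩
    obtain ⟨W, hW, hxW, hWs⟩ := hS s hsS x hxs
    exact ⟨W, hW, hxW, hWs.trans (subset_sUnion_of_mem hsS)⟩

theorem le_starTop : ‹TopologicalSpace X› ≤ starTop X :=
  le_generateFrom fun _ hA => StarOpen.isOpen hA

theorem regOpen_connectedComponentIn [LocallyConnectedSpace X] {W : Set X}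
    (hW : RegOpen X W) {x : X} (hx : x ∈ W) : RegOpen X (connectedComponentIn W x) := by
  set D := connectedComponentIn W x
  have hD_le_reg : D ⊆ interior (closure D) :=
    interior_maximal subset_closure hW.isOpen.connectedComponentIn
  have hreg_le_W : interior (closure D) ⊆ W :=
    hW ▸ interior_mono (closure_mono (connectedComponentIn_subset W x))
  have hreg : IsPreconnected (interior (closure D)) :=
    isPreconnected_connectedComponentIn.subset_closure hD_le_reg interior_subset
  exact subset_antisymm
    (hreg.subset_connectedComponentIn (hD_le_reg (mem_connectedComponentIn hx)) hreg_le_W)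
    hD_le_reg

end StarTopology

theorem stmt17 {X : Type*} [TopologicalSpace X] (h : LocallyConnectedSpace X) :
    @LocallyConnectedSpace X (starTop X) := by
  rw [@locallyConnectedSpace_iff_subsets_isOpen_isConnected X (starTop X)]
  intro x U hU
  obtain ⟨O, hOU, hO, hxO⟩ := (@mem_nhds_iff X (starTop X) x U).1 hU
  obtain ⟨W, hW, hxW, hWO⟩ := isOpen_starTop_iff.1 hO x hxO
  have hD : RegOpen X (connectedComponentIn W x) := regOpen_connectedComponentIn hW hxW
  exact ⟨connectedComponentIn W x, (connectedComponentIn_subset W x).trans (hWO.trans hOU),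
    isOpen_starTop_iff.2 hD.starOpen, mem_connectedComponentIn hxW,
    ⟨⟨x, mem_connectedComponentIn hxW⟩, isPreconnected_connectedComponentIn.of_le le_starTop⟩⟩
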